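/- Let G = ⟨a, b, c, s, t | sas⁻¹ = ab, sbs⁻¹ = b, scs⁻¹ = c, tat⁻¹ = ba, tbt⁻¹ = b, tct⁻¹ = c⟩. Then for every nonzero integer k, the centraliser of stᵏ in G is the subgroup generated by {b, c, stᵏ}. -/

import Mathlib

/-- Generators of
`G = ⟨a,b,c,s,t | sas⁻¹=ab, sbs⁻¹=b, scs⁻¹=c, tat⁻¹=ba, tbt⁻¹=b, tct⁻¹=c⟩`. -/
inductive Gen
  | a | b | c | s | t

open FreeGroup in
/-- Relators of
`G = ⟨a,b,c,s,t | sas⁻¹=ab, sbs⁻¹=b, scs⁻¹=c, tat⁻¹=ba, tbt⁻¹=b, tct⁻¹=c⟩`. -/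
def ffRels : Set (FreeGroup Gen) :=
  { of Gen.s * of Gen.a * (of Gen.s)⁻¹ * (of Gen.a * of Gen.b)⁻¹,
    of Gen.s * of Gen.b * (of Gen.s)⁻¹ * (of Gen.b)⁻¹,
    of Gen.s * of Gen.c * (of Gen.s)⁻¹ * (of Gen.c)⁻¹,
    of Gen.t * of Gen.a * (of Gen.t)⁻¹ * (of Gen.b * of Gen.a)⁻¹,
    of Gen.t * of Gen.b * (of Gen.t)⁻¹ * (of Gen.b)⁻¹,
    of Gen.t * of Gen.c * (of Gen.t)⁻¹ * (of Gen.c)⁻¹ }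

/-!
`G` is the semidirect product `F(a, b, c) ⋊ F(s, t)` in which `u ∈ F(s, t)` acts by
`a ↦ b ^ m * a * b ^ n`, `b ↦ b`, `c ↦ c`, where `m` and `n` are the exponent sums of `t` and `s`
in `u`. Hence `(w, u)` commutes with `s * t ^ k` iff `u` commutes with `s * t ^ k` in `F(s, t)` and
`w` is fixed by `φ : a ↦ b ^ k * a * b`.

In a free group, `⟨u, s * t ^ k⟩` is free (Nielsen–Schreier) and abelian, hence cyclic, and
`s * t ^ k` generates it because its exponent sum in `s` is `1`; so `u` is a power of `s * t ^ k`.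

Write `w = u₀ a^ε₁ u₁ ⋯ a^εₙ uₙ` with `uᵢ ∈ ⟨b, c⟩` and no `a^ε 1 a^-ε`. Applying `φ` and regrouping
gives such a form again, with `u₀` replaced by `u₀ b ^ k` or `u₀ b⁻¹` (according to `ε₁`), so
`φ w = w` forces `n = 0`. These forms are produced by an action of `F(a, b, c)` on reduced words,
which makes their uniqueness unnecessary.
-/

open Function (Semiconj)

theorem IsFreeGroup.isCyclic_of_isMulCommutative (G : Type*) [Group G] [IsFreeGroup G]
    [IsMulCommutative G] : IsCyclic G := by
  classical
  have : Subsingleton (IsFreeGroup.Generators G) := by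
    by_contra hX
    obtain ⟨x, y, hxy⟩ := not_subsingleton_iff_nontrivial.mp hX |>.exists_pair_ne
    have h := congrArg (IsFreeGroup.lift fun z => FreeGroup.of (decide (z = x)))
      (IsMulCommutative.is_comm.comm (IsFreeGroup.of x) (IsFreeGroup.of y))
    simp only [map_mul, IsFreeGroup.lift_of, decide_true, hxy.symm, decide_false] at h
    revert h; decide
  cases isEmpty_or_nonempty (IsFreeGroup.Generators G)
  · have := (IsFreeGroup.toFreeGroup G).injective.subsingleton
    infer_instance
  · have := uniqueOfSubsingleton (Classical.arbitrary (IsFreeGroup.Generators G))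
    exact isCyclic_of_surjective (IsFreeGroup.toFreeGroup G).symm
      (IsFreeGroup.toFreeGroup G).symm.surjective

theorem IsFreeGroup.mem_zpowers_of_commute {G : Type*} [Group G] [IsFreeGroup G]
    (χ : G →* Multiplicative ℤ) {g u : G} (hg : χ g = .ofAdd 1) (hu : Commute u g) :
    u ∈ Subgroup.zpowers g := by
  set H := Subgroup.closure {u, g}
  have : IsMulCommutative H := Subgroup.isMulCommutative_closure <| by
    rintro x (rfl | rfl) y (rfl | rfl) <;> first | rfl | exact hu | exact hu.symm
  have := IsFreeGroup.isCyclic_of_isMulCommutative H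
  obtain ⟨r, hr⟩ := IsCyclic.exists_generator (α := H)
  obtain ⟨d, hd⟩ := hr ⟨g, Subgroup.subset_closure (by simp)⟩
  obtain ⟨m, hm⟩ := hr ⟨u, Subgroup.subset_closure (by simp)⟩
  replace hd : (r : G) ^ d = g := congrArg Subtype.val hd
  replace hm : (r : G) ^ m = u := congrArg Subtype.val hm
  -- `χ g = 1` forces `d = ±1`, so `r` is itself a power of `g`
  have hde : d * (χ r).toAdd = 1 := by
    simpa [← hd, toAdd_zpow] using congrArg Multiplicative.toAdd hg
  have hr_pow : (r : G) = g ^ (χ r).toAdd := by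
    rw [← hd, ← zpow_mul, hde, zpow_one]
  rw [← hm, hr_pow]
  exact zpow_mem (zpow_mem (Subgroup.mem_zpowers g) _) m

theorem FreeGroup.semiconj_of_forall_of {X α β : Type*} {f : α → β}
    {ρ : FreeGroup X →* Equiv.Perm α} {σ : FreeGroup X →* Equiv.Perm β}
    (h : ∀ x, Semiconj f (ρ (of x)) (σ (of x))) (g : FreeGroup X) : Semiconj f (ρ g) (σ g) := by
  induction g using FreeGroup.induction_on with
  | C1 => simpa using Semiconj.id_right
  | of x => exact h x
  | inv_of x hx =>
    rw [_root_.map_inv, _root_.map_inv]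
    exact hx.inverses_right (ρ (of x)).apply_symm_apply (σ (of x)).symm_apply_apply
  | mul g g' hg hg' =>
    rw [_root_.map_mul, _root_.map_mul, Equiv.Perm.coe_mul, Equiv.Perm.coe_mul]
    exact hg.comp_right hg'

theorem MulEquiv.map_centralizer {G H : Type*} [Group G] [Group H] (e : G ≃* H) (s : Set G) :
    (Subgroup.centralizer s).map e.toMonoidHom = Subgroup.centralizer (e '' s) := by
  refine le_antisymm (Subgroup.map_centralizer_le_centralizer_image s _) fun x hx => ?_
  refine ⟨e.symm x, fun y hy => e.injective ?_, by simp⟩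
  simpa using hx (e y) ⟨y, hy, rfl⟩

namespace SemidirectProduct

variable {N G : Type*} [Group N] [Group G] {φ : G →* MulAut N}

theorem centralizer_singleton_inr (g : G) :
    Subgroup.centralizer {(inr g : N ⋊[φ] G)} =
      ((φ g).toMonoidHom.eqLocus (MonoidHom.id N)).map inl ⊔
        (Subgroup.centralizer {g}).map inr := by
  apply le_antisymm
  · intro x hx
    have hcomm := Subgroup.mem_centralizer_singleton_iff.mp hx
    have hleft : φ g x.left = x.left := by
      simpa [mul_left] using (congrArg left hcomm).symm
    have hright : x.right * g = g * x.right := by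
      simpa [mul_right] using congrArg right hcomm
    rw [← inl_left_mul_inr_right x]
    exact Subgroup.mul_mem_sup (Subgroup.mem_map_of_mem _ hleft)
      (Subgroup.mem_map_of_mem _ (Subgroup.mem_centralizer_singleton_iff.mpr hright))
  · refine sup_le ?_ ?_ <;> rintro _ ⟨n, hn, rfl⟩ <;>
      rw [Subgroup.mem_centralizer_singleton_iff]
    · have hn : φ g n = n := hn
      nth_rw 1 [← hn]
      rw [inl_aut, map_inv, inv_mul_cancel_right]
    · rw [← map_mul, ← map_mul, Subgroup.mem_centralizer_singleton_iff.mp hn]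

end SemidirectProduct

namespace FreeGroup

variable {X : Type*}

def twist (p q : FreeGroup X) : FreeGroup (Option X) →* FreeGroup (Option X) :=
  FreeGroup.lift fun
    | none => map some p * of none * map some q
    | some x => of (some x)

section Twist

variable (p q : FreeGroup X)

@[simp] theorem twist_of_none : twist p q (of none) = map some p * of none * map some q :=
  lift_apply_of

@[simp] theorem twist_of_some (x : X) : twist p q (of (some x)) = of (some x) := lift_apply_of

@[simp] theorem twist_map_some (u : FreeGroup X) : twist p q (map some u) = map some u := by
  rw [← MonoidHom.comp_apply, show (twist p q).comp (map some) = map some from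
    ext_hom _ _ fun _ => by simp]

end Twist

theorem twist_comp_twist (p q p' q' : FreeGroup X) :
    (twist p q).comp (twist p' q') = twist (p' * p) (q * q') := by
  ext (_ | x) <;> simp [mul_assoc]

theorem twist_one_one : twist (1 : FreeGroup X) 1 = MonoidHom.id _ := by
  ext (_ | x) <;> simp

def twistEquiv (p q : FreeGroup X) : MulAut (FreeGroup (Option X)) :=
  MonoidHom.toMulEquiv (twist p q) (twist p⁻¹ q⁻¹)
    (by rw [twist_comp_twist, mul_inv_cancel, inv_mul_cancel, twist_one_one])
    (by rw [twist_comp_twist, inv_mul_cancel, mul_inv_cancel, twist_one_one])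

@[simp] theorem twistEquiv_apply (p q : FreeGroup X) (w : FreeGroup (Option X)) :
    twistEquiv p q w = twist p q w := rfl

def twistAut (β : FreeGroup X) : Multiplicative (ℤ × ℤ) →* MulAut (FreeGroup (Option X)) where
  toFun mn := twistEquiv (β ^ mn.toAdd.1) (β ^ mn.toAdd.2)
  map_one' := MulEquiv.ext fun w => by simp [twist_one_one]
  map_mul' mn mn' := MulEquiv.ext fun w => by
    simp only [toAdd_mul, Prod.fst_add, Prod.snd_add, twistEquiv_apply, MulAut.mul_apply]
    rw [← MonoidHom.comp_apply, twist_comp_twist, ← zpow_add, ← zpow_add, add_comm mn.toAdd.1]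

@[simp] theorem twistAut_apply (β : FreeGroup X) (mn : Multiplicative (ℤ × ℤ)) :
    twistAut β mn = twistEquiv (β ^ mn.toAdd.1) (β ^ mn.toAdd.2) := rfl

namespace Syllables

-- `(u, [(ε₁, u₁), …, (εₙ, uₙ)])` stands for `u * a ^ ε₁ * u₁ * ⋯ * a ^ εₙ * uₙ`, where
-- `a = of none`, `a ^ true = a`, `a ^ false = a⁻¹` and the `uᵢ` lie in `F(X)`;
-- reduced words contain no `a ^ ε * 1 * a ^ (!ε)`.
abbrev Word (X : Type*) := FreeGroup X × List (Bool × FreeGroup X)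

def Reduced (l : List (Bool × FreeGroup X)) : Prop := l.IsChain fun y z => y.2 = 1 → y.1 = z.1

abbrev NormalWord (X : Type*) := {w : Word X // Reduced w.2}

instance : MulAction (FreeGroup X) (NormalWord X) where
  smul u w := ⟨(u * w.1.1, w.1.2), w.2⟩
  one_smul _ := Subtype.ext (Prod.ext (one_mul _) rfl)
  mul_smul _ _ _ := Subtype.ext (Prod.ext (mul_assoc _ _ _) rfl)

theorem smul_val (u : FreeGroup X) (w : NormalWord X) : (u • w).1 = (u * w.1.1, w.1.2) := rfl

section Twist

variable (p q : FreeGroup X)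

-- `twist p q` maps `a ^ ε` (with `a = of none`) to `leftFactor ε * a ^ ε * rightFactor ε`.
def rightFactor (ε : Bool) : FreeGroup X := if ε then q else p⁻¹

def leftFactor (ε : Bool) : FreeGroup X := (rightFactor p q (!ε))⁻¹

def headLeftFactor : List (Bool × FreeGroup X) → FreeGroup X
  | [] => 1
  | (ε, _) :: _ => leftFactor p q ε

def twistTail : List (Bool × FreeGroup X) → List (Bool × FreeGroup X)
  | [] => []
  | (ε, u) :: l => (ε, rightFactor p q ε * u * headLeftFactor p q l) :: twistTail l

def twistWord (w : Word X) : Word X := (w.1 * headLeftFactor p q w.2, twistTail p q w.2)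

theorem reduced_twistTail : ∀ {l : List (Bool × FreeGroup X)}, Reduced l → Reduced (twistTail p q l)
  | [], _ => List.isChain_nil
  | [_], _ => List.isChain_singleton _
  | (ε, u) :: (ε', u') :: l, h => by
    refine List.IsChain.cons_cons (fun h1 => ?_) (reduced_twistTail h.tail)
    by_contra hne
    obtain rfl : ε' = !ε := by cases ε <;> cases ε' <;> simp_all
    have hu : u = 1 := by
      simpa [headLeftFactor, leftFactor, mul_inv_eq_one, mul_eq_left] using h1
    exact hne ((List.isChain_cons_cons.mp h).1 hu)

def twistNormalWord (w : NormalWord X) : NormalWord X :=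
  ⟨twistWord p q w.1, reduced_twistTail p q w.2⟩

theorem twistNormalWord_smul (u : FreeGroup X) (w : NormalWord X) :
    twistNormalWord p q (u • w) = u • twistNormalWord p q w :=
  Subtype.ext (Prod.ext (mul_assoc _ _ _) rfl)

end Twist

variable [DecidableEq X]

def mulLetter (ε : Bool) : Word X → Word X
  | (u, (ε', v) :: l) => if u = 1 ∧ ε' ≠ ε then (v, l) else (1, (ε, u) :: (ε', v) :: l)
  | (u, []) => (1, [(ε, u)])

theorem reduced_mulLetter (ε : Bool) : ∀ {w : Word X}, Reduced w.2 → Reduced (mulLetter ε w).2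
  | (u, []), _ => List.isChain_singleton _
  | (u, (ε', v) :: l), h => by
    simp only [mulLetter]
    split_ifs with hu
    · exact h.tail
    · exact List.IsChain.cons_cons (fun hu1 => by simp_all) h

theorem mulLetter_not_mulLetter (ε : Bool) :
    ∀ {w : Word X}, Reduced w.2 → mulLetter (!ε) (mulLetter ε w) = w
  | (u, []), _ => by simp [mulLetter]
  | (u, (ε', v) :: l), h => by
    by_cases hu : u = 1 ∧ ε' ≠ ε
    · obtain ⟨rfl, hε⟩ := hu
      obtain rfl : ε' = !ε := by cases ε <;> cases ε' <;> simp_all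
      rw [mulLetter, if_pos ⟨rfl, hε⟩]
      rcases l with _ | ⟨⟨ε'', w⟩, l⟩
      · simp [mulLetter]
      · have : ¬(v = 1 ∧ ε'' ≠ !ε) := fun ⟨hv, hne⟩ => hne ((List.isChain_cons_cons.mp h).1 hv).symm
        rw [mulLetter, if_neg this]
    · simp [mulLetter, hu]

def letterPerm : Equiv.Perm (NormalWord X) where
  toFun w := ⟨mulLetter true w.1, reduced_mulLetter true w.2⟩
  invFun w := ⟨mulLetter false w.1, reduced_mulLetter false w.2⟩
  left_inv w := Subtype.ext (mulLetter_not_mulLetter true w.2)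
  right_inv w := Subtype.ext (mulLetter_not_mulLetter false w.2)

theorem letterPerm_val (w : NormalWord X) : (letterPerm w).1 = mulLetter true w.1 := rfl

def wordAction : FreeGroup (Option X) →* Equiv.Perm (NormalWord X) :=
  FreeGroup.lift fun
    | none => letterPerm
    | some x => MulAction.toPerm (of x)

@[simp] theorem wordAction_of_none :
    wordAction (of none) = (letterPerm : Equiv.Perm (NormalWord X)) :=
  lift_apply_of

@[simp] theorem wordAction_of_some (x : X) :
    wordAction (of (some x)) = MulAction.toPerm (β := NormalWord X) (of x) :=
  lift_apply_of

@[simp] theorem wordAction_map_some (u : FreeGroup X) :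
    wordAction (map some u) = MulAction.toPerm (β := NormalWord X) u := by
  change _ = MulAction.toPermHom (FreeGroup X) (NormalWord X) u
  rw [← MonoidHom.comp_apply]
  exact DFunLike.congr_fun (ext_hom (wordAction.comp (map some)) (MulAction.toPermHom _ _)
    fun _ => lift_apply_of) u

def letter (ε : Bool) : FreeGroup (Option X) := if ε then of none else (of none)⁻¹

def eval (w : Word X) : FreeGroup (Option X) :=
  map some w.1 * (w.2.map fun y => letter y.1 * map some y.2).prod

theorem eval_mulLetter (ε : Bool) (w : Word X) : eval (mulLetter ε w) = letter ε * eval w := by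
  obtain ⟨u, _ | ⟨⟨ε', v⟩, l⟩⟩ := w
  · simp [mulLetter, eval]
  · simp only [mulLetter]
    split_ifs with hu
    · obtain ⟨rfl, hε⟩ := hu
      cases ε <;> cases ε' <;> simp_all [eval, letter, mul_assoc]
    · simp [eval, mul_assoc]

theorem eval_wordAction (g : FreeGroup (Option X)) :
    Semiconj (fun w : NormalWord X => eval w.1) (wordAction g) (MulAction.toPerm g) := by
  refine semiconj_of_forall_of (σ := MulAction.toPermHom _ _) (fun x w => ?_) g
  cases x with
  | none => exact eval_mulLetter true w.1
  | some x =>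
    change eval (of x • w).1 = _
    simp [smul_val, eval, mul_assoc]

section Twist

variable (p q : FreeGroup X)

theorem twistNormalWord_letterPerm (w : NormalWord X) :
    twistNormalWord p q (letterPerm w) = p • letterPerm (q • twistNormalWord p q w) := by
  obtain ⟨⟨u, l⟩, -⟩ := w
  -- `a` cancels a leading `a⁻¹` on the right-hand side exactly when it does on the left
  have hconj : q * (u * q⁻¹) = 1 ↔ u = 1 := by rw [← mul_assoc, conj_eq_one_iff]
  apply Subtype.ext
  rcases l with _ | ⟨⟨_ | _, v⟩, l⟩ <;>
    simp [twistNormalWord, twistWord, twistTail, headLeftFactor, letterPerm_val, mulLetter,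
      smul_val, rightFactor, leftFactor, mul_assoc, hconj]
  split_ifs <;> simp_all [twistTail, headLeftFactor, rightFactor, leftFactor, mul_assoc]

theorem semiconj_twistNormalWord (g : FreeGroup (Option X)) :
    Semiconj (twistNormalWord p q) (wordAction g) (wordAction (twist p q g)) := by
  refine semiconj_of_forall_of (σ := wordAction.comp (twist p q)) (fun x w => ?_) g
  cases x with
  | none => simpa [Equiv.Perm.mul_apply] using twistNormalWord_letterPerm p q w
  | some x => simpa using twistNormalWord_smul p q (of x) w

end Twist

end Syllables

open Syllables in
theorem eqLocus_twist {p q : FreeGroup X} (hp : p ≠ 1) (hq : q ≠ 1) :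
    (twist p q).eqLocus (MonoidHom.id _) = (map some).range := by
  classical
  refine le_antisymm (fun w hw => ?_) (by rintro _ ⟨u, rfl⟩; exact twist_map_some p q u)
  replace hw : twist p q w = w := hw
  let e : NormalWord X := ⟨(1, []), List.isChain_nil⟩
  have hfix : twistNormalWord p q (wordAction w e) = wordAction w e := by
    rw [semiconj_twistNormalWord p q w e, hw]
    rfl
  have heval : eval (wordAction w e).1 = w := (eval_wordAction w e).trans (by simp [e, eval])
  -- `wordAction w e` is a reduced form of `w`; twisting it would multiply its head by
  -- `leftFactor ε ∈ {p, q⁻¹}` if it had a first syllable `(ε, _)`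
  generalize wordAction w e = x at hfix heval
  obtain ⟨⟨u, _ | ⟨⟨ε, v⟩, l⟩⟩, _⟩ := x
  · exact ⟨u, by simpa [eval] using heval⟩
  · have h : u * leftFactor p q ε = u := congrArg (·.1.1) hfix
    cases ε <;> simp [leftFactor, rightFactor, hp, hq] at h

end FreeGroup

namespace FreeByFree

open FreeGroup SemidirectProduct

inductive FibreGen
  | b | c
  deriving DecidableEq

inductive BaseGen
  | s | t

-- `F(a, b, c)`, with `a = of none`
abbrev Fibre := FreeGroup (Option FibreGen)

abbrev Base := FreeGroup BaseGen

def expSum : Base →* Multiplicative (ℤ × ℤ) :=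
  FreeGroup.lift fun
    | .s => .ofAdd (0, 1)
    | .t => .ofAdd (1, 0)

-- `u` acts by `a ↦ b ^ m * a * b ^ n`, `b ↦ b`, `c ↦ c`, where `(m, n) = expSum u`
def action : Base →* MulAut Fibre := (twistAut (of .b)).comp expSum

abbrev Model := Fibre ⋊[action] Base

def stk (k : ℤ) : Base := of .s * of .t ^ k

theorem expSum_stk (k : ℤ) : expSum (stk k) = .ofAdd (k, 1) := by
  simp [stk, expSum, ← ofAdd_zsmul, ← ofAdd_add]

theorem action_stk (k : ℤ) : action (stk k) = twistEquiv (of .b ^ k) (of .b) := by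
  simp [action, expSum_stk]

theorem centralizer_stk (k : ℤ) : Subgroup.centralizer {stk k} = Subgroup.zpowers (stk k) := by
  refine le_antisymm (fun u hu => ?_) (Subgroup.zpowers_le.mpr
    (Subgroup.mem_centralizer_singleton_iff.mpr rfl))
  exact IsFreeGroup.mem_zpowers_of_commute ((AddMonoidHom.snd ℤ ℤ).toMultiplicative.comp expSum)
    (by simp [expSum_stk]) (Subgroup.mem_centralizer_singleton_iff.mp hu)

theorem eqLocus_action_stk {k : ℤ} (hk : k ≠ 0) :
    (action (stk k)).toMonoidHom.eqLocus (MonoidHom.id _) =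
      Subgroup.closure {of (some .b), of (some .c)} := by
  rw [action_stk]
  change (twist _ _).eqLocus _ = _
  rw [eqLocus_twist (by simp [hk]) (of_ne_one _), range_map]
  congr 1
  ext w
  constructor
  · rintro ⟨_, ⟨(_ | _), rfl⟩, rfl⟩ <;> simp
  · rintro (rfl | rfl) <;> exact ⟨_, ⟨_, rfl⟩, rfl⟩

theorem centralizer_inr_stk {k : ℤ} (hk : k ≠ 0) :
    Subgroup.centralizer {(inr (stk k) : Model)} =
      Subgroup.closure {inl (of (some .b)), inl (of (some .c)), inr (stk k)} := by
  rw [centralizer_singleton_inr, eqLocus_action_stk hk, centralizer_stk, MonoidHom.map_closure,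
    MonoidHom.map_zpowers, Subgroup.zpowers_eq_closure, ← Subgroup.closure_union,
    Set.image_insert_eq, Set.image_singleton, Set.insert_union, Set.singleton_union]

abbrev G := PresentedGroup ffRels

theorem forall_lift_eq_one_iff {H : Type*} [Group H] (f : Gen → H) :
    (∀ r ∈ ffRels, FreeGroup.lift f r = 1) ↔
      f .s * f .a * (f .s)⁻¹ = f .a * f .b ∧ f .s * f .b * (f .s)⁻¹ = f .b ∧
      f .s * f .c * (f .s)⁻¹ = f .c ∧ f .t * f .a * (f .t)⁻¹ = f .b * f .a ∧
      f .t * f .b * (f .t)⁻¹ = f .b ∧ f .t * f .c * (f .t)⁻¹ = f .c := by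
  simp [ffRels, mul_inv_eq_one, -mul_inv_rev]

theorem lift_of_eq_one_of_mem {r : FreeGroup Gen} (hr : r ∈ ffRels) :
    FreeGroup.lift (PresentedGroup.of : Gen → G) r = 1 := by
  rw [show FreeGroup.lift (PresentedGroup.of : Gen → G) = PresentedGroup.mk ffRels from
    FreeGroup.ext_hom _ _ fun _ => rfl]
  exact PresentedGroup.one_of_mem hr

def fibreHom : Fibre →* G :=
  FreeGroup.lift fun
    | none => .of .a
    | some .b => .of .b
    | some .c => .of .c

def baseHom : Base →* G :=
  FreeGroup.lift fun
    | .s => .of .s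
    | .t => .of .t

theorem fibreHom_action (g : Base) (n : Fibre) :
    fibreHom (action g n) = baseHom g * fibreHom n * (baseHom g)⁻¹ := by
  refine semiconj_of_forall_of (ρ := (MulAut.toPerm _).comp action)
    (σ := (MulAut.toPerm _).comp (MulAut.conj.comp baseHom)) (fun x => ?_) g n
  suffices fibreHom.comp (action (of x)).toMonoidHom =
      (MulAut.conj (baseHom (of x))).toMonoidHom.comp fibreHom from
    DFunLike.congr_fun this
  have relations :=
    (forall_lift_eq_one_iff (PresentedGroup.of : Gen → G)).mp fun _ => lift_of_eq_one_of_mem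
  refine FreeGroup.ext_hom _ _ fun y => ?_
  cases x <;> rcases y with _ | _ | _ <;>
    simp [action, expSum, fibreHom, baseHom, relations]

def toPresented : Model →* G :=
  SemidirectProduct.lift fibreHom baseHom fun g => MonoidHom.ext (fibreHom_action g)

def genImage : Gen → Model
  | .a => inl (of none)
  | .b => inl (of (some .b))
  | .c => inl (of (some .c))
  | .s => inr (of .s)
  | .t => inr (of .t)

theorem lift_genImage_eq_one : ∀ r ∈ ffRels, FreeGroup.lift genImage r = 1 := by
  refine (forall_lift_eq_one_iff genImage).mpr ⟨?_, ?_, ?_, ?_, ?_, ?_⟩ <;>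
    simp only [genImage, ← _root_.map_inv, ← inl_aut, ← _root_.map_mul, inl_inj] <;>
    simp [action, expSum]

def ofPresented : G →* Model := PresentedGroup.toGroup lift_genImage_eq_one

def presentedEquiv : G ≃* Model :=
  MonoidHom.toMulEquiv ofPresented toPresented
    (PresentedGroup.ext fun x => by
      cases x <;> simp [ofPresented, toPresented, genImage, fibreHom, baseHom])
    (SemidirectProduct.hom_ext
      (FreeGroup.ext_hom _ _ fun x => by
        rcases x with _ | _ | _ <;> simp [ofPresented, toPresented, genImage, fibreHom])
      (FreeGroup.ext_hom _ _ fun x => by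
        cases x <;> simp [ofPresented, toPresented, genImage, baseHom]))

@[simp] theorem presentedEquiv_of (x : Gen) : presentedEquiv (.of x) = genImage x :=
  PresentedGroup.toGroup.of lift_genImage_eq_one

end FreeByFree

/-- In `G`, for every nonzero integer `k`: `C_G(stᵏ) = ⟨b, c, stᵏ⟩`. -/
theorem centralizer_stk_ff (k : ℤ) (hk : k ≠ 0) :
    Subgroup.centralizer
        {(PresentedGroup.of Gen.s * (PresentedGroup.of Gen.t : PresentedGroup ffRels) ^ k :
          PresentedGroup ffRels)} =
      Subgroup.closure
        {PresentedGroup.of Gen.b, PresentedGroup.of Gen.c,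
          PresentedGroup.of Gen.s *
            (PresentedGroup.of Gen.t : PresentedGroup ffRels) ^ k} := by
  have hstk : FreeByFree.presentedEquiv (.of .s * .of .t ^ k) =
      SemidirectProduct.inr (FreeByFree.stk k) := by
    simp [FreeByFree.genImage, FreeByFree.stk]
  apply Subgroup.map_injective (f := FreeByFree.presentedEquiv.toMonoidHom)
    FreeByFree.presentedEquiv.injective
  rw [MulEquiv.map_centralizer, MonoidHom.map_closure, Set.image_singleton, hstk,
    FreeByFree.centralizer_inr_stk hk]
  simp [Set.image_insert_eq, hstk, FreeByFree.genImage]
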